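/- Let r ≥ 1 and k ≥ 2 be integers and let ℓ_1, ..., ℓ_k be nonnegative integers with ℓ_1 + ⋯ + ℓ_k + k - 1 = r. Let 𝒜_r'' be the set of all permutations (coordinate rearrangements) of the r-tuple r·( (1/(ℓ_1+1))(1, ..., ℓ_1); (1/(ℓ_2+1))(1, ..., ℓ_2); ...; (1/(ℓ_k+1))(1, ..., ℓ_k); 1/2, ..., 1/2; 1 ), where the entry 1/2 is repeated k-2 times and a block (1/(ℓ_n+1))(1,...,ℓ_n) is empty if ℓ_n = 0. Then 𝒜_r'' ⊆ 𝒜_r, where 𝒜_r is the convex hull in ℝ^r of the set of all permutations of the r-tuple (1, 2, ..., r). -/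

import Mathlib

/-! By Rado's theorem, `v` lies in the permutohedron `𝒜_r` as soon as its coordinates sum to
`1 + ⋯ + r` and any `s` of them sum to at least `1 + ⋯ + s`. The nontrivial direction follows by
separating `v` from `𝒜_r` by a linear functional `c` and comparing `v` with the permutation of
`(1, …, r)` ordered like `c`, using Abel summation.

For the multiset in question, any `s` entries of a block `r·(1, …, m)/(m+1)` sum to at least
`r/(m+1) · s(s+1)/2`, and the inequality
`(x+y)(x+y+1)/(a+b+1) ≤ x(x+1)/(a+1) + y(y+1)/(b+1)` for `x ≤ a`, `y ≤ b` merges such bounds.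
Each entry `r/2` is a block with `ℓ = 1`, so all the blocks together have `r - 1` entries, any `s`
of which sum to at least `s(s+1)/2`; the remaining entry `r` handles the sub-multisets containing
it. -/

/-- `𝒜_r`: the convex hull in ℝ^r of the set of all permutations of the vector (1, 2, ..., r). -/
def permsHull (r : ℕ) : Set (Fin r → ℝ) :=
  convexHull ℝ {v : Fin r → ℝ | ∃ σ : Equiv.Perm (Fin r), v = fun i => ((σ i : ℕ) : ℝ) + 1}

open Finset

theorem sum_range_natCast_add_one (t : ℕ) : ∑ i ∈ range t, ((i : ℝ) + 1) = t * (t + 1) / 2 := by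
  induction t with
  | zero => simp
  | succ t ih => rw [sum_range_succ, ih]; push_cast; ring

theorem sum_range_succ_mul_le_of_partialSums_nonneg {a g : ℕ → ℝ} {n : ℕ}
    (ha : ∀ i < n, a i ≤ a (i + 1)) (hg : ∀ t ≤ n, 0 ≤ ∑ i ∈ range t, g i) :
    ∑ i ∈ range (n + 1), a i * g i ≤ a n * ∑ i ∈ range (n + 1), g i := by
  induction n with
  | zero => simp
  | succ n ih =>
    have hle := ih (fun i hi => ha i (by omega)) (fun t ht => hg t (by omega))
    have hstep := mul_le_mul_of_nonneg_right (ha n n.lt_succ_self) (hg (n + 1) le_rfl)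
    rw [sum_range_succ, sum_range_succ g]
    linarith

theorem sum_range_mul_nonpos_of_partialSums_nonneg {a g : ℕ → ℝ} {n : ℕ}
    (ha : ∀ i, i + 1 < n → a i ≤ a (i + 1)) (hg : ∀ t ≤ n, 0 ≤ ∑ i ∈ range t, g i)
    (htot : ∑ i ∈ range n, g i = 0) :
    ∑ i ∈ range n, a i * g i ≤ 0 := by
  obtain _ | n := n
  · simp
  · have := sum_range_succ_mul_le_of_partialSums_nonneg (n := n) (fun i hi => ha i (by omega))
      (fun t ht => hg t (by omega))
    rwa [htot, mul_zero] at this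

theorem exists_perm_sum_mul_le {r : ℕ} (c v : Fin r → ℝ)
    (htot : ∑ i, v i = r * (r + 1) / 2)
    (hsub : ∀ T : Finset (Fin r), (#T : ℝ) * (#T + 1) / 2 ≤ ∑ i ∈ T, v i) :
    ∃ σ : Equiv.Perm (Fin r), ∑ i, c i * v i ≤ ∑ i, c i * ((σ i : ℕ) + 1) := by
  set π := Tuple.sort c
  refine ⟨π.symm, ?_⟩
  let a : ℕ → ℝ := fun i => if h : i < r then c (π ⟨i, h⟩) else 0
  let g : ℕ → ℝ := fun i => if h : i < r then v (π ⟨i, h⟩) - (i + 1) else 0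
  have hprefix : ∀ t (ht : t ≤ r), ∑ i ∈ range t, g i
      = ∑ i ∈ univ.map ((Fin.castLEEmb ht).trans π.toEmbedding), v i - t * (t + 1) / 2 := by
    intro t ht
    rw [sum_map, ← sum_range_natCast_add_one, ← Fin.sum_univ_eq_sum_range,
      ← Fin.sum_univ_eq_sum_range, ← sum_sub_distrib]
    refine sum_congr rfl fun j _ => ?_
    simp [g, j.isLt.trans_le ht, Fin.castLE]
  have hsorted : ∀ i, i + 1 < r → a i ≤ a (i + 1) := by
    intro i hi
    simp only [a, dif_pos hi, dif_pos (i.lt_succ_self.trans hi)]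
    exact Tuple.monotone_sort c (Fin.mk_le_mk.2 i.le_succ)
  have hpartial : ∀ t ≤ r, 0 ≤ ∑ i ∈ range t, g i := by
    intro t ht
    have := hsub (univ.map ((Fin.castLEEmb ht).trans π.toEmbedding))
    rw [card_map, card_univ, Fintype.card_fin] at this
    linarith [hprefix t ht]
  have key := sum_range_mul_nonpos_of_partialSums_nonneg hsorted hpartial
    (by simpa [htot] using hprefix r le_rfl)
  rw [← Fin.sum_univ_eq_sum_range] at key
  calc ∑ i, c i * v i = ∑ j, c (π j) * v (π j) := (Equiv.sum_comp π fun i => c i * v i).symm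
    _ ≤ ∑ j : Fin r, c (π j) * ((j : ℕ) + 1) := by
        have : ∑ j : Fin r, c (π j) * (v (π j) - ((j : ℕ) + 1)) ≤ 0 := by simpa [a, g] using key
        simp only [mul_sub, sum_sub_distrib] at this
        linarith
    _ = ∑ i, c i * ((π.symm i : ℕ) + 1) := by
        simpa using Equiv.sum_comp π fun i => c i * (((π.symm i : ℕ) : ℝ) + 1)

theorem mem_permsHull_of_forall_le_sum {r : ℕ} (v : Fin r → ℝ)
    (htot : ∑ i, v i = r * (r + 1) / 2)
    (hsub : ∀ T : Finset (Fin r), (#T : ℝ) * (#T + 1) / 2 ≤ ∑ i ∈ T, v i) :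
    v ∈ permsHull r := by
  classical
  by_contra hv
  have hfin : {w : Fin r → ℝ | ∃ σ : Equiv.Perm (Fin r), w = fun i => ((σ i : ℕ) : ℝ) + 1}.Finite :=
    (Set.finite_range fun σ : Equiv.Perm (Fin r) => fun i => ((σ i : ℕ) : ℝ) + 1).subset
      (by rintro _ ⟨σ, rfl⟩; exact ⟨σ, rfl⟩)
  have hclosed : IsClosed (permsHull r) := (hfin.isCompact_convexHull ℝ).isClosed
  obtain ⟨f, u, hf_hull, hf_v⟩ :=
    geometric_hahn_banach_closed_point (convex_convexHull ℝ _) hclosed hv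
  have hf : ∀ x, f x = ∑ i, f (fun j => if i = j then 1 else 0) * x i := fun x => by
    simp [← ContinuousLinearMap.coe_coe, LinearMap.pi_apply_eq_sum_univ _ x, mul_comm]
  obtain ⟨σ, hσ⟩ := exists_perm_sum_mul_le _ v htot hsub
  have := hf_hull _ (subset_convexHull ℝ _ ⟨σ, rfl⟩)
  rw [hf] at this hf_v
  linarith

theorem add_mul_add_add_one_div_le {x y a b : ℝ} (hx : 0 ≤ x) (hy : 0 ≤ y) (hxa : x ≤ a)
    (hyb : y ≤ b) :
    (x + y) * (x + y + 1) / (a + b + 1) ≤ x * (x + 1) / (a + 1) + y * (y + 1) / (b + 1) := by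
  have ha : 0 ≤ a := hx.trans hxa
  have hb : 0 ≤ b := hy.trans hyb
  rw [div_add_div _ _ (by positivity) (by positivity),
    div_le_div_iff₀ (by positivity) (by positivity)]
  set P := x * (x + 1) * b * (b + 1)
  set Q := y * (y + 1) * a * (a + 1)
  set R := x * y * ((a + 1) * (b + 1))
  -- after clearing denominators the claim is `2R ≤ P + Q`, i.e. AM-GM once `R² ≤ PQ`
  have hRPQ : R ^ 2 ≤ P * Q := by
    have hxa' : x * (a + 1) ≤ (x + 1) * a := by linarith
    have hyb' : y * (b + 1) ≤ (y + 1) * b := by linarith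
    have := mul_le_mul hxa' hyb' (by positivity) (by positivity)
    nlinarith [mul_le_mul_of_nonneg_left this (by positivity : 0 ≤ x * y * (a + 1) * (b + 1))]
  have hP : 0 ≤ P := by positivity
  have hQ : 0 ≤ Q := by positivity
  have hR : 0 ≤ R := by positivity
  have key : 2 * R ≤ P + Q := by nlinarith [sq_nonneg (P - Q)]
  linear_combination key

def SubsumBound (d : ℝ) (A : Multiset ℝ) : Prop :=
  ∀ S ≤ A, d * (Multiset.card S * (Multiset.card S + 1) / 2) ≤ S.sum

namespace SubsumBound

variable {d c x : ℝ} {A B : Multiset ℝ}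

theorem zero : SubsumBound d 0 := by
  intro S hS
  simp [Multiset.le_zero.1 hS]

theorem cons (hA : SubsumBound d A) (hd : 0 ≤ d) (hx : d * (Multiset.card A + 1) ≤ x) :
    SubsumBound d (x ::ₘ A) := by
  classical
  intro S hS
  by_cases hxS : x ∈ S
  · have hle : S.erase x ≤ A := Multiset.erase_le_iff_le_cons.2 hS
    have hcard : (Multiset.card (S.erase x) : ℝ) ≤ Multiset.card A := by
      exact_mod_cast Multiset.card_le_card hle
    have := hA _ hle
    rw [← Multiset.cons_erase hxS, Multiset.card_cons, Multiset.sum_cons]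
    push_cast
    nlinarith
  · exact hA S ((Multiset.le_cons_of_notMem hxS).1 hS)

theorem add (hc : 0 ≤ c) (hA : SubsumBound (c / (Multiset.card A + 1)) A)
    (hB : SubsumBound (c / (Multiset.card B + 1)) B) :
    SubsumBound (c / (Multiset.card (A + B) + 1)) (A + B) := by
  classical
  intro S hS
  have hSA : S ∩ A ≤ A := Multiset.inter_le_right
  have hSB : S - A ≤ B := Multiset.sub_le_iff_le_add.2 (by rwa [add_comm])
  have hsplit : S - A + S ∩ A = S := Multiset.sub_add_inter S A
  have hxa : (Multiset.card (S ∩ A) : ℝ) ≤ Multiset.card A := by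
    exact_mod_cast Multiset.card_le_card hSA
  have hyb : (Multiset.card (S - A) : ℝ) ≤ Multiset.card B := by
    exact_mod_cast Multiset.card_le_card hSB
  set x : ℝ := ((Multiset.card (S ∩ A) : ℕ) : ℝ)
  set y : ℝ := ((Multiset.card (S - A) : ℕ) : ℝ)
  have hmerge := add_mul_add_add_one_div_le (Nat.cast_nonneg _) (Nat.cast_nonneg _) hxa hyb
  have h1 := hA _ hSA
  have h2 := hB _ hSB
  rw [← hsplit, Multiset.card_add, Multiset.sum_add, Multiset.card_add]
  push_cast
  calc c / (Multiset.card A + Multiset.card B + 1) * ((y + x) * (y + x + 1) / 2)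
      = c / 2 * ((x + y) * (x + y + 1) / (Multiset.card A + Multiset.card B + 1)) := by ring
    _ ≤ c / 2 * (x * (x + 1) / (Multiset.card A + 1) + y * (y + 1) / (Multiset.card B + 1)) := by
        gcongr
    _ = c / (Multiset.card A + 1) * (x * (x + 1) / 2)
        + c / (Multiset.card B + 1) * (y * (y + 1) / 2) := by ring
    _ ≤ (S - A).sum + (S ∩ A).sum := by linarith

theorem sum {ι : Type*} {F : ι → Multiset ℝ} (hc : 0 ≤ c) (s : Finset ι)
    (hF : ∀ i ∈ s, SubsumBound (c / (Multiset.card (F i) + 1)) (F i)) :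
    SubsumBound (c / (Multiset.card (∑ i ∈ s, F i) + 1)) (∑ i ∈ s, F i) := by
  induction s using Finset.cons_induction with
  | empty => exact zero
  | cons a s ha ih =>
    rw [sum_cons]
    exact add hc (hF a (mem_cons_self a s)) (ih fun i hi => hF i (mem_cons_of_mem hi))

end SubsumBound

theorem subsumBound_map_range {d : ℝ} (hd : 0 ≤ d) (n : ℕ) :
    SubsumBound d ((Multiset.range n).map fun j : ℕ => d * ((j : ℝ) + 1)) := by
  induction n with
  | zero => exact SubsumBound.zero
  | succ n ih =>
    rw [Multiset.range_succ, Multiset.map_cons]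
    exact ih.cons hd (by simp)

/-- The block `c · (1/(m+1))(1, …, m)` of the paper. -/
noncomputable def fracBlock (c : ℝ) (m : ℕ) : Multiset ℝ :=
  (Multiset.range m).map fun j : ℕ => c / (m + 1) * ((j : ℝ) + 1)

theorem card_fracBlock (c : ℝ) (m : ℕ) : Multiset.card (fracBlock c m) = m := by
  simp [fracBlock]

theorem subsumBound_fracBlock {c : ℝ} (hc : 0 ≤ c) (m : ℕ) :
    SubsumBound (c / (Multiset.card (fracBlock c m) + 1)) (fracBlock c m) := by
  rw [card_fracBlock]
  exact subsumBound_map_range (by positivity) m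

theorem sum_sum_fracBlock {ι : Type*} (c : ℝ) (m : ι → ℕ) (s : Finset ι) :
    (∑ i ∈ s, fracBlock c (m i)).sum = c / 2 * Multiset.card (∑ i ∈ s, fracBlock c (m i)) := by
  have hblock : ∀ i, (fracBlock c (m i)).sum = c / 2 * m i := fun i => by
    rw [fracBlock, Multiset.sum_map_mul_left, ← Finset.range_val, ← Finset.sum_eq_multiset_sum,
      sum_range_natCast_add_one]
    field_simp
  simp [Multiset.sum_sum, Multiset.card_sum, hblock, card_fracBlock, mul_sum]

theorem bind_add_replicate_add_singleton_eq (r : ℝ) (k : ℕ) (l : Fin k → ℕ) :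
    (Finset.univ.val.bind fun n : Fin k =>
        (Multiset.range (l n)).map fun j => r * ((j : ℝ) + 1) / ((l n : ℝ) + 1))
      + Multiset.replicate (k - 2) (r / 2) + {r}
      = r ::ₘ ∑ i : Fin k ⊕ Fin (k - 2), fracBlock r (Sum.elim l 1 i) := by
  rw [Fintype.sum_sum_type, add_comm _ ({r} : Multiset ℝ), Multiset.singleton_add]
  congr 2
  · rw [Finset.sum_eq_multiset_sum]
    refine congrArg Multiset.join (Multiset.map_congr rfl fun n _ => ?_)
    simp only [bind_pure_comp, Multiset.fmap_def, Multiset.map_map, fracBlock, Sum.elim_inl]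
    exact Multiset.map_congr rfl fun j _ => (div_mul_eq_mul_div _ _ _).symm
  · simp only [fracBlock, Sum.elim_inr, Pi.one_apply, Finset.sum_const, card_univ,
      Fintype.card_fin]
    rw [show Multiset.range 1 = {0} from rfl, Multiset.map_singleton, Multiset.nsmul_singleton]
    norm_num

theorem stmt_5 (r k : ℕ) (l : Fin k → ℕ) :
    ∀ v : Fin r → ℝ,
      Finset.univ.val.map v =
        (Finset.univ.val.bind fun n : Fin k =>
          (Multiset.range (l n)).map fun j =>
            (r : ℝ) * ((j : ℝ) + 1) / ((l n : ℝ) + 1))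
        + Multiset.replicate (k - 2) ((r : ℝ) / 2) + {(r : ℝ)} →
      v ∈ permsHull r := by
  intro v hv
  rw [bind_add_replicate_add_singleton_eq] at hv
  set A := ∑ i : Fin k ⊕ Fin (k - 2), fracBlock r (Sum.elim l 1 i)
  have hcard : (r : ℝ) = Multiset.card A + 1 := by
    have := congrArg Multiset.card hv
    simp only [Multiset.card_map, card_val, card_univ, Fintype.card_fin, Multiset.card_cons] at this
    exact_mod_cast this
  have hA : SubsumBound 1 A := by
    have := SubsumBound.sum (Nat.cast_nonneg r) (univ : Finset (Fin k ⊕ Fin (k - 2))) fun i _ =>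
      subsumBound_fracBlock (Nat.cast_nonneg r) (Sum.elim l 1 i)
    rwa [← hcard, div_self (by rw [hcard]; positivity)] at this
  have hrA : SubsumBound 1 ((r : ℝ) ::ₘ A) := hA.cons zero_le_one (by rw [hcard, one_mul])
  apply mem_permsHull_of_forall_le_sum
  · have hsumA : A.sum = r / 2 * Multiset.card A := sum_sum_fracBlock _ _ _
    rw [Finset.sum_eq_multiset_sum, hv, Multiset.sum_cons, hsumA]
    linear_combination (-(r : ℝ) / 2) * hcard
  · intro T
    simpa using hrA (T.val.map v) (hv ▸ Multiset.map_le_map (val_le_iff.2 (subset_univ T)))
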